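/- arXiv:2605.01972 — 4 statements merged into one kernel-verified Lean document; each statement's English description precedes it below -/
import Mathlib

section
/- Assume ψ : [0,1] → [0,∞) is continuous with ψ(0) = 0 and there exists c₀ > 0 such that ψ(x) ≥ c₀·x for all x ∈ [0,1]. Let δ ∈ (0,1) and let x_N, x_T ∈ ℂ with x_T ≠ 0 and |x_N| ≤ min(1, c₀)·|x_T|. Then |x_T| ≤ κ_{G_ψ}(p_δ; (x_N, x_T)) ≤ max(1, (|x_N|/|x_T|)·(1/(1−δ)))·|x_T|. -/
open Complex Metric Set

/-- The Kobayashi–Royden metric of a domain `Ω ⊆ ℂ²` at point `z` in direction `X`: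
the infimum of `1/λ` over all `λ > 0` admitting a holomorphic map `φ : 𝔻 → Ω`
with `φ 0 = z` and `φ' 0 = λ • X`. -/
noncomputable def kob (Ω : Set (ℂ × ℂ)) (z X : ℂ × ℂ) : ℝ :=
  sInf {c : ℝ | ∃ lam : ℝ, 0 < lam ∧ c = 1 / lam ∧
    ∃ φ : ℂ → ℂ × ℂ, DifferentiableOn ℂ φ (ball (0 : ℂ) 1) ∧
      MapsTo φ (ball (0 : ℂ) 1) Ω ∧ φ 0 = z ∧ deriv φ 0 = lam • X}

/-- The model domain `G_ψ = {z ∈ 𝔻² : Re z₁ < ψ(|z₂|)}`. -/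
def Gpsi (ψ : ℝ → ℝ) : Set (ℂ × ℂ) :=
  {z : ℂ × ℂ | ‖z.1‖ < 1 ∧ ‖z.2‖ < 1 ∧ z.1.re < ψ (‖z.2‖)}

/-- The base point `p_δ = (-δ, 0)`. -/
noncomputable def pdel (δ : ℝ) : ℂ × ℂ := ((-δ : ℂ), 0)

/-!
The lower bound is the Schwarz lemma applied to the second coordinate of an analytic disc,
which maps `𝔻` into `𝔻` and fixes `0`. For the upper bound, the straight disc
`ζ ↦ p_δ + ζ v` with `v = X / c` lies in `G_ψ` as soon as `|v₂| ≤ 1`, `|v₁| ≤ 1 - δ` (so the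
first coordinate stays in `𝔻`) and `|v₁| ≤ c₀ |v₂|`, because then
`Re z₁ ≤ -δ + |ζ| |v₁| < c₀ |ζ v₂| ≤ ψ(|z₂|)`. The choice `c = max(1, |x_N| / (|x_T| (1 - δ))) |x_T|`
is the smallest `c` meeting the first two conditions.
-/

-- `kob Ω z X` is definitionally `sInf (kobSet Ω z X)`.
def kobSet (Ω : Set (ℂ × ℂ)) (z X : ℂ × ℂ) : Set ℝ :=
  {c : ℝ | ∃ lam : ℝ, 0 < lam ∧ c = 1 / lam ∧
    ∃ φ : ℂ → ℂ × ℂ, DifferentiableOn ℂ φ (ball (0 : ℂ) 1) ∧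
      MapsTo φ (ball (0 : ℂ) 1) Ω ∧ φ 0 = z ∧ deriv φ 0 = lam • X}

section KobayashiRoyden

variable {Ω : Set (ℂ × ℂ)} {z X : ℂ × ℂ}

theorem bddBelow_kobSet : BddBelow (kobSet Ω z X) :=
  ⟨0, by rintro _ ⟨lam, hlam, rfl, -⟩; positivity⟩

theorem mem_kobSet_of_affine_disc {c : ℝ} (hc : 0 < c)
    (hmaps : MapsTo (fun ζ : ℂ => z + ζ • c⁻¹ • X) (ball 0 1) Ω) : c ∈ kobSet Ω z X := by
  have hderiv : HasDerivAt (fun ζ : ℂ => z + ζ • c⁻¹ • X) (c⁻¹ • X) 0 := by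
    simpa using ((hasDerivAt_id (0 : ℂ)).smul_const (c⁻¹ • X)).const_add z
  refine ⟨c⁻¹, inv_pos.mpr hc, by rw [one_div, inv_inv], _, ?_, hmaps, by simp, hderiv.deriv⟩
  exact (differentiable_const z |>.add (differentiable_id.smul_const _)).differentiableOn

theorem norm_snd_le_of_mem_kobSet (hΩ : Ω ⊆ {w | ‖w.2‖ < 1}) (hz : z.2 = 0) {c : ℝ}
    (hc : c ∈ kobSet Ω z X) : ‖X.2‖ ≤ c := by
  obtain ⟨lam, hlam, rfl, φ, hφ, hmaps, hφ0, hφ'⟩ := hc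
  have hsnd_maps : MapsTo (fun ζ => (φ ζ).2) (ball 0 1) (closedBall (φ 0).2 1) := fun ζ hζ => by
    simpa [hφ0, hz] using (hΩ (hmaps hζ)).le
  have hsnd' : HasDerivAt (fun ζ => (φ ζ).2) (lam • X.2) 0 := by
    have hφ_at := (hφ.differentiableAt (ball_mem_nhds 0 one_pos)).hasDerivAt
    rw [hφ'] at hφ_at
    exact hφ_at.snd
  have hschwarz := norm_deriv_le_div_of_mapsTo_ball hφ.snd hsnd_maps one_pos
  rw [hsnd'.deriv, norm_smul, Real.norm_of_nonneg hlam.le, div_one] at hschwarz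
  rw [le_div_iff₀ hlam, mul_comm]
  exact hschwarz

end KobayashiRoyden

theorem Gpsi_subset_norm_snd_lt_one {ψ : ℝ → ℝ} : Gpsi ψ ⊆ {w | ‖w.2‖ < 1} := fun _ hw => hw.2.1

theorem affine_disc_mapsTo_Gpsi {ψ : ℝ → ℝ} {c₀ δ : ℝ}
    (hlow : ∀ x ∈ Icc (0 : ℝ) 1, c₀ * x ≤ ψ x) (hδ : δ ∈ Ioo (0 : ℝ) 1) {v : ℂ × ℂ}
    (hv₂ : ‖v.2‖ ≤ 1) (hv₁ : ‖v.1‖ ≤ 1 - δ) (hv₁₂ : ‖v.1‖ ≤ c₀ * ‖v.2‖) :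
    MapsTo (fun ζ : ℂ => pdel δ + ζ • v) (ball 0 1) (Gpsi ψ) := by
  intro ζ hζ
  rw [mem_ball_zero_iff] at hζ
  obtain ⟨hδ0, hδ1⟩ := hδ
  have hz₂ : ‖ζ * v.2‖ ≤ ‖ζ‖ := by
    rw [norm_mul]; exact mul_le_of_le_one_right (norm_nonneg ζ) hv₂
  have hz₁ : ‖ζ * v.1‖ ≤ ‖ζ‖ * (1 - δ) := by
    rw [norm_mul]; exact mul_le_mul_of_nonneg_left hv₁ (norm_nonneg ζ)
  have hz₁₂ : ‖ζ * v.1‖ ≤ c₀ * ‖ζ * v.2‖ := by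
    rw [norm_mul, norm_mul, mul_left_comm]
    exact mul_le_mul_of_nonneg_left hv₁₂ (norm_nonneg ζ)
  simp only [pdel, Gpsi, mem_ofPred_eq, Prod.fst_add, Prod.snd_add, smul_eq_mul, Prod.smul_fst,
    Prod.smul_snd, zero_add]
  refine ⟨?_, hz₂.trans_lt hζ, ?_⟩
  · calc ‖(-δ : ℂ) + ζ * v.1‖ ≤ δ + ‖ζ * v.1‖ := by
          simpa [abs_of_pos hδ0] using norm_add_le (-δ : ℂ) (ζ * v.1)
      _ < 1 := by nlinarith
  · calc ((-δ : ℂ) + ζ * v.1).re ≤ -δ + ‖ζ * v.1‖ := by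
          simpa using re_le_norm (ζ * v.1)
      _ < ψ ‖ζ * v.2‖ := by
          linarith [hlow _ ⟨norm_nonneg _, hz₂.trans hζ.le⟩]

theorem mem_kobSet_Gpsi {ψ : ℝ → ℝ} {c₀ δ : ℝ}
    (hlow : ∀ x ∈ Icc (0 : ℝ) 1, c₀ * x ≤ ψ x) (hδ : δ ∈ Ioo (0 : ℝ) 1) {X : ℂ × ℂ} {c : ℝ}
    (hc : 0 < c) (hX₂ : ‖X.2‖ ≤ c) (hX₁ : ‖X.1‖ ≤ (1 - δ) * c) (hX₁₂ : ‖X.1‖ ≤ c₀ * ‖X.2‖) :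
    c ∈ kobSet (Gpsi ψ) (pdel δ) X := by
  refine mem_kobSet_of_affine_disc hc (affine_disc_mapsTo_Gpsi hlow hδ ?_ ?_ ?_)
  all_goals simp only [Prod.smul_fst, Prod.smul_snd, norm_smul, norm_inv, Real.norm_of_nonneg hc.le]
  · rwa [inv_mul_le_one₀ hc]
  · rwa [inv_mul_le_iff₀ hc, mul_comm]
  · rw [mul_left_comm]
    exact mul_le_mul_of_nonneg_left hX₁₂ (inv_nonneg.mpr hc.le)

theorem stmt1_general (ψ : ℝ → ℝ) (c₀ : ℝ)
    (hlow : ∀ x ∈ Icc (0 : ℝ) 1, c₀ * x ≤ ψ x)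
    (δ : ℝ) (hδ : δ ∈ Ioo (0 : ℝ) 1)
    (xN xT : ℂ) (hxT : xT ≠ 0)
    (hmaj : ‖xN‖ ≤ min 1 c₀ * ‖xT‖) :
    ‖xT‖ ≤ kob (Gpsi ψ) (pdel δ) (xN, xT) ∧
    kob (Gpsi ψ) (pdel δ) (xN, xT) ≤
      max 1 (‖xN‖ / ‖xT‖ * (1 / (1 - δ))) * ‖xT‖ := by
  have hT : 0 < ‖xT‖ := norm_pos_iff.mpr hxT
  have h1δ : 0 < 1 - δ := sub_pos.mpr hδ.2
  set c := max 1 (‖xN‖ / ‖xT‖ * (1 / (1 - δ))) * ‖xT‖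
  have hN : ‖xN‖ ≤ (1 - δ) * c := by
    calc ‖xN‖ = (1 - δ) * (‖xN‖ / ‖xT‖ * (1 / (1 - δ)) * ‖xT‖) := by field_simp
      _ ≤ (1 - δ) * c := by
          gcongr; exact mul_le_mul_of_nonneg_right (le_max_right _ _) hT.le
  have hmem : c ∈ kobSet (Gpsi ψ) (pdel δ) (xN, xT) :=
    mem_kobSet_Gpsi hlow hδ (by positivity) (le_mul_of_one_le_left hT.le (le_max_left 1 _)) hN
      (hmaj.trans (mul_le_mul_of_nonneg_right (min_le_right _ _) hT.le))
  exact ⟨le_csInf ⟨c, hmem⟩ fun _ ↦ norm_snd_le_of_mem_kobSet Gpsi_subset_norm_snd_lt_one rfl,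
    csInf_le bddBelow_kobSet hmem⟩

/-- estimates for the Kobayashi–Royden metric in nearly tangential directions
when `ψ(x) ≥ c₀ x`. -/
theorem stmt1 (ψ : ℝ → ℝ) (c₀ : ℝ) (hc₀ : 0 < c₀)
    (hcont : ContinuousOn ψ (Icc 0 1)) (hψ0 : ψ 0 = 0)
    (hnonneg : ∀ x ∈ Icc (0 : ℝ) 1, 0 ≤ ψ x)
    (hlow : ∀ x ∈ Icc (0 : ℝ) 1, c₀ * x ≤ ψ x)
    (δ : ℝ) (hδ : δ ∈ Ioo (0 : ℝ) 1)
    (xN xT : ℂ) (hxT : xT ≠ 0)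
    (hmaj : ‖xN‖ ≤ min 1 c₀ * ‖xT‖) :
    ‖xT‖ ≤ kob (Gpsi ψ) (pdel δ) (xN, xT) ∧
    kob (Gpsi ψ) (pdel δ) (xN, xT) ≤
      max 1 (‖xN‖ / ‖xT‖ * (1 / (1 - δ))) * ‖xT‖ :=
  stmt1_general ψ c₀ hlow δ hδ xN xT hxT hmaj
end

section
/- Assume ψ : [0,1] → [0,∞) is continuous with ψ(0) = 0 and there exists c₀ > 0 such that ψ(x) ≥ c₀·√x for all x ∈ [0,1]. Then for every δ₀ ∈ (0,1) there exists C ≥ 1 (depending only on c₀ and δ₀) such that for all δ ∈ (0, δ₀] and all (x_N, x_T) ∈ ℂ²: max(|x_N|, |x_T|) ≤ κ_{G_ψ}(p_δ; (x_N, x_T)) ≤ C·max(|x_N|, |x_T|). -/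
/-!
The Kobayashi–Royden metric of `G_ψ` at `p_δ` is bounded below by the sup norm because `G_ψ`
lies in the unit bidisc, the unit ball of the sup norm on `ℂ²`, so Cauchy's estimate bounds the
derivative at `0` of any holomorphic disc in `G_ψ` by `1`.

For the upper bound, every `v` with `‖v‖ ≤ r` (`r` small in terms of `c₀` and `δ₀`) is the
derivative of the disc `φ ζ = (-δ + v₁ ζ, (u / 4) ζ (ζ - w))`, with `|u| = 1` and `w` chosen
so that `Re (v₁ w) ≤ 0`. Then `Re (v₁ ζ) ≤ r · min (|ζ|, |ζ - w|) ≤ r √(|ζ| |ζ - w|)`, which is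
`2r √|φ₂ ζ|`, so `Re φ₁ ζ < c₀ √|φ₂ ζ| ≤ ψ (|φ₂ ζ|)` as soon as `r ≤ c₀ / 2`.
-/

open Complex Metric Set

open Filter

theorem norm_deriv_le_div_of_forall_mem_ball_norm_le {E : Type*} [NormedAddCommGroup E]
    [NormedSpace ℂ E] {f : ℂ → E} {c : ℂ} {R C : ℝ} (hR : 0 < R)
    (hd : DifferentiableOn ℂ f (ball c R)) (hC : ∀ z ∈ ball c R, ‖f z‖ ≤ C) :
    ‖deriv f c‖ ≤ C / R := by
  refine ge_of_tendsto (((continuousAt_const.div continuousAt_id hR.ne').tendsto).mono_left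
    (nhdsWithin_le_nhds (s := Iio R))) ?_
  filter_upwards [Ioo_mem_nhdsLT hR] with R' ⟨hR'0, hR'R⟩
  have hsub : closedBall c R' ⊆ ball c R := closedBall_subset_ball hR'R
  exact norm_deriv_le_of_forall_mem_sphere_norm_le hR'0
    ((hd.mono hsub).diffContOnCl_ball le_rfl) fun z hz => hC z (hsub (sphere_subset_closedBall hz))

theorem Real.min_le_sqrt_mul {t s : ℝ} (ht : 0 ≤ t) (hs : 0 ≤ s) : min t s ≤ √(t * s) :=
  (Real.le_sqrt (le_min ht hs) (mul_nonneg ht hs)).2 <| by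
    rw [sq]
    exact mul_le_mul (min_le_left t s) (min_le_right t s) (le_min ht hs) ht

theorem Complex.re_mul_le_norm_mul_min {a z w : ℂ} (hw : (a * w).re ≤ 0) :
    (a * z).re ≤ ‖a‖ * min ‖z‖ ‖z - w‖ := by
  have h₁ : (a * z).re ≤ ‖a‖ * ‖z‖ := (re_le_norm _).trans (norm_mul a z).le
  have h₂ : (a * (z - w)).re ≤ ‖a‖ * ‖z - w‖ := (re_le_norm _).trans (norm_mul a _).le
  rw [mul_min_of_nonneg _ _ (norm_nonneg a)]
  refine le_min h₁ ?_
  rw [mul_sub, sub_re] at h₂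
  linarith

/-- `kob Ω z X` is, by definition, the infimum of `1 / lam` over `lam > 0` with
`HasDisc Ω z X lam`. -/
def HasDisc (Ω : Set (ℂ × ℂ)) (z X : ℂ × ℂ) (lam : ℝ) : Prop :=
  ∃ φ : ℂ → ℂ × ℂ, DifferentiableOn ℂ φ (ball (0 : ℂ) 1) ∧
    MapsTo φ (ball (0 : ℂ) 1) Ω ∧ φ 0 = z ∧ deriv φ 0 = lam • X

section Kobayashi

variable {Ω : Set (ℂ × ℂ)} {z X : ℂ × ℂ}

theorem kob_le_one_div {lam : ℝ} (hlam : 0 < lam) (h : HasDisc Ω z X lam) :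
    kob Ω z X ≤ 1 / lam :=
  csInf_le ⟨0, by rintro c ⟨lam, hlam, rfl, -⟩; positivity⟩ ⟨lam, hlam, rfl, h⟩

theorem kob_le_div {M r : ℝ} (hM : 0 ≤ M) (hr : 0 < r)
    (h : ∀ lam, 0 < lam → lam * M ≤ r → HasDisc Ω z X lam) : kob Ω z X ≤ M / r := by
  rcases hM.eq_or_lt with rfl | hM
  · rw [zero_div]
    refine le_of_forall_pos_le_add fun ε hε => ?_
    simpa using kob_le_one_div (one_div_pos.2 hε) (h _ (one_div_pos.2 hε) (by simpa using hr.le))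
  · simpa using kob_le_one_div (div_pos hr hM) (h _ (div_pos hr hM) (div_mul_cancel₀ r hM.ne').le)

theorem norm_le_kob (hΩ : Ω ⊆ ball 0 1) (hne : ∃ lam, 0 < lam ∧ HasDisc Ω z X lam) :
    ‖X‖ ≤ kob Ω z X := by
  obtain ⟨lam₀, hlam₀, hdisc₀⟩ := hne
  refine le_csInf ⟨_, lam₀, hlam₀, rfl, hdisc₀⟩ ?_
  rintro c ⟨lam, hlam, rfl, φ, hd, hmaps, -, hderiv⟩
  have hbound := norm_deriv_le_div_of_forall_mem_ball_norm_le one_pos hd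
    fun ζ hζ => (mem_ball_zero_iff.1 (hΩ (hmaps hζ))).le
  rw [hderiv, norm_smul, Real.norm_of_nonneg hlam.le, div_one] at hbound
  rw [le_div_iff₀ hlam, mul_comm]
  exact hbound

end Kobayashi

theorem Gpsi_subset_ball (ψ : ℝ → ℝ) : Gpsi ψ ⊆ ball 0 1 :=
  fun _ hz => mem_ball_zero_iff.2 (max_lt hz.1 hz.2.1)

section Disc

variable {ψ : ℝ → ℝ} {c₀ δ r : ℝ} (hlow : ∀ x ∈ Icc (0 : ℝ) 1, c₀ * √x ≤ ψ x)
include hlow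

theorem mem_Gpsi_of_re_lt {z : ℂ × ℂ} (h₁ : ‖z.1‖ < 1) (h₂ : ‖z.2‖ < 1)
    (h : z.1.re < c₀ * √‖z.2‖) : z ∈ Gpsi ψ :=
  ⟨h₁, h₂, h.trans_le (hlow _ ⟨norm_nonneg _, h₂.le⟩)⟩

theorem exists_disc_Gpsi_pdel (hδ : 0 < δ) (hδr : δ + r < 1) (hr : r ≤ 1 / 4)
    (hrc : r ≤ c₀ / 2) {v : ℂ × ℂ} (hv : ‖v‖ ≤ r) :
    ∃ φ : ℂ → ℂ × ℂ, Differentiable ℂ φ ∧ MapsTo φ (ball 0 1) (Gpsi ψ) ∧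
      φ 0 = pdel δ ∧ deriv φ 0 = v := by
  obtain ⟨a, b⟩ := v
  have ha : ‖a‖ ≤ r := (norm_fst_le (a, b)).trans hv
  have hb : ‖b‖ ≤ r := (norm_snd_le (a, b)).trans hv
  set u := exp (arg (a * b) * I)
  have hu : ‖u‖ = 1 := norm_exp_ofReal_mul_I _
  have hu0 : u ≠ 0 := exp_ne_zero _
  -- the phase `u` makes `a * w = -4 ‖a * b‖`
  set w := -(4 * b / u)
  have hw : (a * w).re ≤ 0 := by
    have hab : a * b = ‖a * b‖ * u := (norm_mul_exp_arg_mul_I _).symm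
    have haw : a * w = ((-4 * ‖a * b‖ : ℝ) : ℂ) :=
      calc a * w = -(4 * (‖a * b‖ * u) / u) := by rw [← hab]; ring
        _ = _ := by field_simp; push_cast; ring
    rw [haw, ofReal_re]
    nlinarith [norm_nonneg (a * b)]
  have hw_norm : ‖w‖ ≤ 4 * r := by
    rw [norm_neg, norm_div, hu, div_one, norm_mul]
    norm_num
    linarith
  have hfactor : ∀ ζ : ℂ, u / 4 * ζ ^ 2 + b * ζ = u / 4 * (ζ * (ζ - w)) := fun ζ => by
    simp only [w]
    field_simp
    ring
  refine ⟨fun ζ => (-δ + a * ζ, u / 4 * ζ ^ 2 + b * ζ), by fun_prop, ?_, by simp [pdel], ?_⟩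
  · intro ζ hζ
    have hζ1 : ‖ζ‖ < 1 := mem_ball_zero_iff.1 hζ
    have hζw : ‖ζ - w‖ ≤ ‖ζ‖ + 4 * r := (norm_sub_le _ _).trans (by linarith)
    have hnorm₂ : ‖u / 4 * ζ ^ 2 + b * ζ‖ = ‖ζ‖ * ‖ζ - w‖ / 4 := by
      rw [hfactor, norm_mul, norm_div, hu, norm_mul]
      norm_num
      ring
    have hsqrt : √(‖ζ‖ * ‖ζ - w‖ / 4) = √(‖ζ‖ * ‖ζ - w‖) / 2 := by
      rw [Real.sqrt_div' _ (by norm_num : (0 : ℝ) ≤ 4), show (4 : ℝ) = 2 ^ 2 by norm_num,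
        Real.sqrt_sq (by norm_num)]
    have hre : (a * ζ).re ≤ r * √(‖ζ‖ * ‖ζ - w‖) :=
      (re_mul_le_norm_mul_min hw).trans <| mul_le_mul ha
        (Real.min_le_sqrt_mul (norm_nonneg _) (norm_nonneg _))
        (le_min (norm_nonneg _) (norm_nonneg _)) ((norm_nonneg a).trans ha)
    apply mem_Gpsi_of_re_lt hlow
    · calc ‖-(δ : ℂ) + a * ζ‖ ≤ δ + ‖a‖ * ‖ζ‖ := by
            simpa [norm_mul, abs_of_pos hδ] using norm_add_le (-(δ : ℂ)) (a * ζ)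
        _ < 1 := by nlinarith [norm_nonneg a, norm_nonneg ζ]
    · rw [hnorm₂]
      nlinarith [norm_nonneg ζ, norm_nonneg (ζ - w)]
    · rw [hnorm₂, hsqrt, add_re, neg_re, ofReal_re]
      nlinarith [Real.sqrt_nonneg (‖ζ‖ * ‖ζ - w‖)]
  · have h₁ := ((hasDerivAt_id (0 : ℂ)).const_mul a).const_add (-(δ : ℂ))
    have h₂ := ((hasDerivAt_pow 2 (0 : ℂ)).const_mul (u / 4)).add
      ((hasDerivAt_id (0 : ℂ)).const_mul b)
    simpa using (h₁.prodMk h₂).deriv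

theorem hasDisc_Gpsi_pdel (hδ : 0 < δ) (hδr : δ + r < 1) (hr : r ≤ 1 / 4)
    (hrc : r ≤ c₀ / 2) {X : ℂ × ℂ} {lam : ℝ} (hlam : 0 < lam) (h : lam * ‖X‖ ≤ r) :
    HasDisc (Gpsi ψ) (pdel δ) X lam := by
  have hv : ‖lam • X‖ ≤ r := by rwa [norm_smul, Real.norm_of_nonneg hlam.le]
  obtain ⟨φ, hd, hmaps, h0, hderiv⟩ := exists_disc_Gpsi_pdel hlow hδ hδr hr hrc hv
  exact ⟨φ, hd.differentiableOn, hmaps, h0, hderiv⟩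

end Disc

theorem stmt3_general (ψ : ℝ → ℝ) (c₀ : ℝ) (hc₀ : 0 < c₀)
    (hlow : ∀ x ∈ Icc (0 : ℝ) 1, c₀ * Real.sqrt x ≤ ψ x) :
    ∀ δ₀ ∈ Ioo (0 : ℝ) 1, ∃ C : ℝ, 1 ≤ C ∧
      ∀ δ ∈ Ioc (0 : ℝ) δ₀, ∀ xN xT : ℂ,
        max (‖xN‖) (‖xT‖) ≤ kob (Gpsi ψ) (pdel δ) (xN, xT) ∧
        kob (Gpsi ψ) (pdel δ) (xN, xT) ≤ C * max (‖xN‖) (‖xT‖) := by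
  rintro δ₀ ⟨hδ₀, hδ₀1⟩
  set r := min ((1 - δ₀) / 2) (min (1 / 4) (c₀ / 2))
  have hr : 0 < r := lt_min (by linarith) (lt_min (by norm_num) (by linarith))
  have hr14 : r ≤ 1 / 4 := (min_le_right _ _).trans (min_le_left _ _)
  have hrc : r ≤ c₀ / 2 := (min_le_right _ _).trans (min_le_right _ _)
  have hrδ₀ : r ≤ (1 - δ₀) / 2 := min_le_left _ _
  refine ⟨1 / r, one_le_one_div hr (by linarith), fun δ ⟨hδ, hδδ₀⟩ xN xT => ?_⟩
  set X : ℂ × ℂ := (xN, xT)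
  have hdisc : ∀ lam, 0 < lam → lam * ‖X‖ ≤ r → HasDisc (Gpsi ψ) (pdel δ) X lam :=
    fun _ hlam => hasDisc_Gpsi_pdel hlow hδ (by linarith) hr14 hrc hlam
  have hlam : r / (‖X‖ + 1) * ‖X‖ ≤ r := by
    rw [div_mul_eq_mul_div, div_le_iff₀ (by positivity)]
    nlinarith [norm_nonneg X]
  change ‖X‖ ≤ _ ∧ _ ≤ 1 / r * ‖X‖
  exact ⟨norm_le_kob (Gpsi_subset_ball ψ) ⟨_, by positivity, hdisc _ (by positivity) hlam⟩,
    (kob_le_div (norm_nonneg X) hr hdisc).trans_eq (by ring)⟩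

/-- when `ψ(x) ≥ c₀ √x`, the Kobayashi–Royden metric is comparable to
`max(|x_N|, |x_T|)`. -/
theorem stmt3 (ψ : ℝ → ℝ) (c₀ : ℝ) (hc₀ : 0 < c₀)
    (hcont : ContinuousOn ψ (Icc 0 1)) (hψ0 : ψ 0 = 0)
    (hnonneg : ∀ x ∈ Icc (0 : ℝ) 1, 0 ≤ ψ x)
    (hlow : ∀ x ∈ Icc (0 : ℝ) 1, c₀ * Real.sqrt x ≤ ψ x) :
    ∀ δ₀ ∈ Ioo (0 : ℝ) 1, ∃ C : ℝ, 1 ≤ C ∧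
      ∀ δ ∈ Ioc (0 : ℝ) δ₀, ∀ xN xT : ℂ,
        max (‖xN‖) (‖xT‖) ≤ kob (Gpsi ψ) (pdel δ) (xN, xT) ∧
        kob (Gpsi ψ) (pdel δ) (xN, xT) ≤ C * max (‖xN‖) (‖xT‖) :=
  stmt3_general ψ c₀ hc₀ hlow
end

section
/- Let 1/2 < β < 1 and ψ(x) = x^β. Then for every δ₀ ∈ (0,1) there exist constants 0 < c < C (depending only on β and δ₀) such that for all δ ∈ (0, δ₀] and all x_N, x_T ∈ ℂ with x_N ≠ 0 and δ^{1/β − 1}·|x_N| ≤ |x_T| ≤ |x_N|, setting t := |x_T|/|x_N|: c·t^{(1−2β)/(2(1−β))}·|x_N| ≤ κ_{G_ψ}(p_δ; (x_N, x_T)) ≤ C·t^{(1−2β)/(2(1−β))}·|x_N|. -/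
open Complex Metric Set

/-!
Put `t = |x_T| / |x_N| = r ^ (2(1 - β))` and `a = r ^ (2β - 1)`. Then `t ^ ((1 - 2β) / (2(1 - β)))`
is `1 / a`, the hypothesis `δ ^ (1/β - 1) ≤ t` says `δ ≤ r ^ (2β)`, and the claim is that the
metric at `p_δ` in direction `(x_N, x_T)` is comparable to `|x_N| / a`.

Upper bound: with `κ = (1 - δ₀) / 2` and after rotating both coordinates, the quadratic disc
`ζ ↦ (-δ + κ a ζ, ζ (κ r + ζ / 2))` lies in `G_ψ`; on `Re ζ > 0` the second coordinate has
modulus at least `κ r |ζ|` (used for `|ζ| ≤ r`) and at least `|ζ|² / 2` (used for `|ζ| ≥ r`).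

Lower bound: for a disc `(f, g)` with `f'(0) = λ x_N`, `g'(0) = λ x_T`, the Schwarz lemma applied
to `g(z) - g'(0) z` gives `|g| ≤ λ |x_T| r + 2 r²` on `|z| < r`, hence a bound for `Re f` there,
and Borel–Carathéodory on that disc gives `λ |x_N| ≤ 2 (sup Re f + δ) / r`. For `Λ = λ |x_N| / a`
this reads `Λ ≤ 2 Λ ^ β + 6`, which bounds `Λ` because `β < 1`.
-/

open Topology

theorem Real.le_rpow_inv_one_sub_of_le_mul_rpow_add {β Λ A B : ℝ} (hβ0 : 0 ≤ β) (hβ1 : β < 1)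
    (hΛ : 0 ≤ Λ) (hA : 0 ≤ A) (hB : 1 ≤ B) (h : Λ ≤ A * Λ ^ β + B) :
    Λ ≤ (A + B) ^ (1 - β)⁻¹ := by
  have hAB : 1 ≤ A + B := by linarith
  rcases le_or_gt Λ 1 with hΛ1 | hΛ1
  · exact hΛ1.trans (Real.one_le_rpow hAB (inv_nonneg.2 (by linarith)))
  have hΛβ : 1 ≤ Λ ^ β := Real.one_le_rpow hΛ1.le hβ0
  have hpow : Λ ^ (1 - β) ≤ A + B := by
    rw [Real.rpow_sub (by linarith), Real.rpow_one, div_le_iff₀ (by linarith)]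
    nlinarith
  calc Λ = (Λ ^ (1 - β)) ^ (1 - β)⁻¹ := by
        rw [← Real.rpow_mul hΛ, mul_inv_cancel₀ (by linarith), Real.rpow_one]
    _ ≤ (A + B) ^ (1 - β)⁻¹ :=
        Real.rpow_le_rpow (Real.rpow_nonneg hΛ _) hpow (inv_nonneg.2 (by linarith))

theorem Real.le_rpow_mul_of_le_two_mul_rpow_add {β r L s : ℝ} (hβ0 : 0 < β) (hβ1 : β < 1)
    (hr : 0 < r) (hL : 0 ≤ L) (hs0 : 0 ≤ s) (hs : s ≤ r ^ (2 * (1 - β)) * L)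
    (h : L ≤ 2 * ((s * r + 2 * r ^ 2) ^ β + r ^ (2 * β)) / r) :
    L ≤ 8 ^ (1 - β)⁻¹ * r ^ (2 * β - 1) := by
  set a := r ^ (2 * β - 1)
  have ha : 0 < a := Real.rpow_pos_of_pos hr _
  have hsr : s * r + 2 * r ^ 2 ≤ (L / a + 2) * r ^ 2 := by
    have : r ^ (2 * (1 - β)) * r = r ^ 2 / a := by
      rw [eq_div_iff ha.ne', ← Real.rpow_two, mul_assoc, mul_comm r, ← Real.rpow_add_one hr.ne',
        ← Real.rpow_add hr]
      ring_nf
    calc s * r + 2 * r ^ 2 ≤ r ^ (2 * (1 - β)) * L * r + 2 * r ^ 2 := by gcongr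
      _ = (L / a + 2) * r ^ 2 := by rw [mul_right_comm, this]; ring
  have hpow : (s * r + 2 * r ^ 2) ^ β ≤ ((L / a) ^ β + 2) * r ^ (2 * β) := by
    have h2 : (2 : ℝ) ^ β ≤ 2 := by
      simpa using Real.rpow_le_rpow_of_exponent_le (by norm_num : (1 : ℝ) ≤ 2) hβ1.le
    calc (s * r + 2 * r ^ 2) ^ β ≤ ((L / a + 2) * r ^ 2) ^ β := by gcongr
      _ = (L / a + 2) ^ β * r ^ (2 * β) := by
          rw [Real.mul_rpow (by positivity) (by positivity), ← Real.rpow_natCast,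
            ← Real.rpow_mul hr.le]
          norm_num
      _ ≤ ((L / a) ^ β + 2) * r ^ (2 * β) := by
          gcongr
          exact (Real.rpow_add_le_add_rpow (by positivity) (by norm_num) hβ0.le hβ1.le).trans
            (by gcongr)
  have hkey : L / a ≤ 2 * (L / a) ^ β + 6 := by
    rw [div_le_iff₀ ha]
    calc L ≤ 2 * (((L / a) ^ β + 2) * r ^ (2 * β) + r ^ (2 * β)) / r := h.trans (by gcongr)
      _ = (2 * (L / a) ^ β + 6) * (r ^ (2 * β) / r) := by ring
      _ = (2 * (L / a) ^ β + 6) * a := by rw [← Real.rpow_sub_one hr.ne']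
  have := Real.le_rpow_inv_one_sub_of_le_mul_rpow_add hβ0.le hβ1 (by positivity) (by norm_num)
    (by norm_num) hkey
  rw [div_le_iff₀ ha] at this
  norm_num at this
  linarith

theorem Real.mul_rpow_two_mul_sub_one_mul_le {β κ r x : ℝ} (hβ0 : 1 / 2 ≤ β) (hβ1 : β ≤ 1)
    (hκ0 : 0 < κ) (hκ1 : κ ≤ 1 / 2) (hr : 0 < r) (hx : 0 < x) :
    κ * r ^ (2 * β - 1) * x ≤ (x * max (κ * r) (x / 2)) ^ β := by
  rcases le_total x r with hxr | hrx
  · have hy : 0 < κ * r * x := by positivity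
    have hyr : (κ * r * x) ^ (1 - β) ≤ (r ^ 2) ^ (1 - β) :=
      Real.rpow_le_rpow hy.le (by nlinarith [mul_le_mul_of_nonneg_left hxr hr.le]) (by linarith)
    calc κ * r ^ (2 * β - 1) * x
        = (κ * r * x) ^ β * ((κ * r * x) ^ (1 - β) * r ^ (2 * β - 2)) := by
          rw [← mul_assoc, ← Real.rpow_add hy, add_sub_cancel, Real.rpow_one,
            Real.rpow_sub hr, Real.rpow_sub hr, Real.rpow_two, Real.rpow_one]
          field_simp
      _ ≤ (κ * r * x) ^ β * ((r ^ 2) ^ (1 - β) * r ^ (2 * β - 2)) := by gcongr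
      _ = (κ * r * x) ^ β := by
          rw [← Real.rpow_natCast, ← Real.rpow_mul hr.le, ← Real.rpow_add hr]
          norm_num [show (2 : ℝ) * (1 - β) + (2 * β - 2) = 0 by ring]
      _ ≤ (x * max (κ * r) (x / 2)) ^ β := by
          refine Real.rpow_le_rpow hy.le ?_ (by linarith)
          nlinarith [le_max_left (κ * r) (x / 2)]
  · calc κ * r ^ (2 * β - 1) * x ≤ 1 / 2 * x ^ (2 * β - 1) * x := by
          gcongr
          linarith
      _ = 1 / 2 * x ^ (2 * β) := by
          rw [mul_assoc, ← Real.rpow_add_one hx.ne']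
          ring_nf
      _ ≤ (1 / 2) ^ β * x ^ (2 * β) := by
          gcongr
          simpa using Real.rpow_le_rpow_of_exponent_ge (by norm_num : (0 : ℝ) < 1 / 2)
            (by norm_num) hβ1
      _ = (x * (x / 2)) ^ β := by
          rw [show x * (x / 2) = 1 / 2 * x ^ 2 by ring,
            Real.mul_rpow (by norm_num) (by positivity), ← Real.rpow_natCast, ← Real.rpow_mul hx.le]
          norm_num
      _ ≤ (x * max (κ * r) (x / 2)) ^ β := by
          gcongr
          exact le_max_right _ _

theorem exists_rpow_two_mul_one_sub_eq {β δ t : ℝ} (hβ0 : 0 < β) (hβ1 : β < 1) (hδ : 0 < δ)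
    (ht1 : t ≤ 1) (hδt : δ ^ (1 / β - 1) ≤ t) :
    ∃ r, 0 < r ∧ r ≤ 1 ∧ r ^ (2 * (1 - β)) = t ∧ δ ≤ r ^ (2 * β) ∧
      t ^ ((1 - 2 * β) / (2 * (1 - β))) = (r ^ (2 * β - 1))⁻¹ := by
  have ht0 : 0 < t := (Real.rpow_pos_of_pos hδ _).trans_le hδt
  have hβ' : 1 - β ≠ 0 := by linarith
  refine ⟨t ^ (2 * (1 - β))⁻¹, Real.rpow_pos_of_pos ht0 _,
    Real.rpow_le_one ht0.le ht1 (by positivity), ?_, ?_, ?_⟩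
  · rw [← Real.rpow_mul ht0.le, inv_mul_cancel₀ (mul_ne_zero two_ne_zero hβ'), Real.rpow_one]
  · calc δ = (δ ^ (1 / β - 1)) ^ (β / (1 - β)) := by
          rw [← Real.rpow_mul hδ.le, show (1 / β - 1) * (β / (1 - β)) = 1 by field_simp,
            Real.rpow_one]
      _ ≤ t ^ (β / (1 - β)) := by gcongr
      _ = (t ^ (2 * (1 - β))⁻¹) ^ (2 * β) := by
          rw [← Real.rpow_mul ht0.le]
          congr 1
          field_simp
  · rw [← Real.rpow_mul ht0.le, ← Real.rpow_neg ht0.le]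
    congr 1
    field_simp
    ring

namespace Complex

theorem norm_le_norm_two_mul_ofReal_sub {B : ℝ} {w : ℂ} (hB : 0 ≤ B) (hw : w.re ≤ B) :
    ‖w‖ ≤ ‖2 * (B : ℂ) - w‖ := by
  rw [← sq_le_sq₀ (norm_nonneg _) (norm_nonneg _), Complex.sq_norm, Complex.sq_norm, normSq_apply,
    normSq_apply]
  simp only [sub_re, sub_im, mul_re, mul_im, ofReal_re, ofReal_im]
  norm_num
  nlinarith [mul_nonneg hB (sub_nonneg.2 hw)]

theorem norm_deriv_le_of_re_lt {f : ℂ → ℂ} {c : ℂ} {R M : ℝ} (hR : 0 < R)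
    (hf : DifferentiableOn ℂ f (ball c R)) (hM : ∀ z ∈ ball c R, (f z).re < M) :
    ‖deriv f c‖ ≤ 2 * (M - (f c).re) / R := by
  have hc : c ∈ ball c R := mem_ball_self hR
  set B := M - (f c).re
  have hB : 0 < B := sub_pos.2 (hM c hc)
  set F : ℂ → ℂ := fun z => f z - f c
  have hFre : ∀ z ∈ ball c R, (F z).re ≤ B := fun z hz => by
    simp only [F, sub_re, B]; linarith [hM z hz]
  have hden : ∀ z ∈ ball c R, 2 * (B : ℂ) - F z ≠ 0 := fun z hz h => by
    have := congrArg re h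
    simp only [sub_re, mul_re, ofReal_re, ofReal_im, zero_re] at this
    norm_num at this
    linarith [hFre z hz]
  set G : ℂ → ℂ := fun z => F z / (2 * B - F z)
  -- `F ↦ F / (2B - F)` maps the half-plane `re < B` into the unit disc
  have hmaps : MapsTo G (ball c R) (closedBall (G c) 1) := by
    intro z hz
    simp only [G, F, sub_self, zero_div, mem_closedBall, dist_zero_right, norm_div]
    exact div_le_one_of_le₀ (norm_le_norm_two_mul_ofReal_sub hB.le (hFre z hz)) (norm_nonneg _)
  have hF : HasDerivAt F (deriv f c) c :=
    (hf.differentiableAt (isOpen_ball.mem_nhds hc)).hasDerivAt.sub_const _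
  have hG : HasDerivAt G (deriv f c / (2 * B)) c := by
    refine (hF.div (hF.const_sub _) (hden c hc)).congr_deriv ?_
    have hB' : (B : ℂ) ≠ 0 := ofReal_ne_zero.2 hB.ne'
    simp only [F, sub_self, sub_zero, zero_mul]
    field_simp
  have hGd : DifferentiableOn ℂ G (ball c R) :=
    (hf.sub_const _).div ((hf.sub_const _).const_sub _) hden
  have hSchwarz := norm_deriv_le_div_of_mapsTo_ball hGd hmaps hR
  rw [hG.deriv, norm_div, div_le_div_iff₀ (by simp [hB.ne']) hR] at hSchwarz
  rw [le_div_iff₀ hR]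
  simpa [abs_of_pos hB] using hSchwarz

theorem norm_le_norm_deriv_mul_add_sq {g : ℂ → ℂ} (hg : DifferentiableOn ℂ g (ball 0 1))
    (hmaps : MapsTo g (ball 0 1) (ball 0 1)) (hg0 : g 0 = 0) {z : ℂ} (hz : z ∈ ball 0 1) :
    ‖g z‖ ≤ ‖deriv g 0‖ * ‖z‖ + (1 + ‖deriv g 0‖) * ‖z‖ ^ 2 := by
  set d := deriv g 0
  set h : ℂ → ℂ := fun w => g w - d * w
  have h0 : (0 : ℂ) ∈ ball (0 : ℂ) 1 := mem_ball_self one_pos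
  have hh : HasDerivAt h 0 0 :=
    ((hg.differentiableAt (isOpen_ball.mem_nhds h0)).hasDerivAt.sub
      ((hasDerivAt_id (0 : ℂ)).const_mul d)).congr_deriv (by simp [d])
  have hmaps' : MapsTo h (ball 0 1) (closedBall (h 0) (1 + ‖d‖)) := by
    intro w hw
    have hw1 : ‖w‖ < 1 := mem_ball_zero_iff.1 hw
    rw [mem_closedBall, dist_eq_norm]
    simp only [h, hg0, mul_zero, sub_zero]
    calc ‖g w - d * w‖ ≤ ‖g w‖ + ‖d‖ * ‖w‖ := (norm_sub_le _ _).trans_eq (by rw [norm_mul])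
      _ ≤ 1 + ‖d‖ := by
        gcongr
        · exact (mem_ball_zero_iff.1 (hmaps hw)).le
        · exact mul_le_of_le_one_right (norm_nonneg _) hw1.le
  -- `h` vanishes to second order at `0`, so the Schwarz lemma gains a factor `‖z‖`
  have hlittle : (fun w => h w - h 0) =o[𝓝 0] fun w => ‖w - 0‖ ^ 1 := by
    simpa using (hasDerivAt_iff_isLittleO.1 hh).norm_right
  have hhd : DifferentiableOn ℂ h (ball 0 1) :=
    hg.sub (differentiable_id.const_mul d).differentiableOn
  have := dist_le_mul_div_pow_of_mapsTo_ball_of_isLittleO hhd hmaps' hlittle hz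
  simp only [h, hg0, mul_zero, sub_zero, dist_zero_right, div_one, Nat.reduceAdd] at this
  calc ‖g z‖ ≤ ‖g z - d * z‖ + ‖d * z‖ := norm_le_norm_sub_add _ _
    _ ≤ ‖d‖ * ‖z‖ + (1 + ‖d‖) * ‖z‖ ^ 2 := by rw [norm_mul]; linarith

theorem max_le_norm_ofReal_add {p : ℝ} {w : ℂ} (hp : 0 ≤ p) (hw : 0 ≤ w.re) :
    max p ‖w‖ ≤ ‖(p : ℂ) + w‖ := by
  have hsq : ‖(p : ℂ) + w‖ ^ 2 = (p + w.re) ^ 2 + w.im ^ 2 := by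
    rw [Complex.sq_norm, normSq_apply]; simp; ring
  refine max_le ?_ ?_
  · rw [← sq_le_sq₀ hp (norm_nonneg _), hsq]; nlinarith
  · rw [← sq_le_sq₀ (norm_nonneg _) (norm_nonneg _), hsq, Complex.sq_norm, normSq_apply]
    nlinarith

theorem norm_deriv_le_of_re_lt_rpow_norm {β r : ℝ} {f g : ℂ → ℂ} (hβ : 0 ≤ β) (hr0 : 0 < r)
    (hr1 : r ≤ 1) (hf : DifferentiableOn ℂ f (ball 0 1)) (hg : DifferentiableOn ℂ g (ball 0 1))
    (hgmaps : MapsTo g (ball 0 1) (ball 0 1)) (hg0 : g 0 = 0)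
    (hfg : ∀ z ∈ ball (0 : ℂ) 1, (f z).re < ‖g z‖ ^ β) :
    ‖deriv f 0‖ ≤ 2 * ((‖deriv g 0‖ * r + 2 * r ^ 2) ^ β - (f 0).re) / r := by
  have hs1 : ‖deriv g 0‖ ≤ 1 := by
    refine norm_deriv_le_one_of_mapsTo_ball hg (fun z hz => ?_) one_pos
    simpa [hg0] using (mem_ball_zero_iff.1 (hgmaps hz)).le
  refine norm_deriv_le_of_re_lt hr0 (hf.mono (ball_subset_ball hr1)) fun z hz => ?_
  have hzr : ‖z‖ < r := mem_ball_zero_iff.1 hz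
  have hz1 : z ∈ ball (0 : ℂ) 1 := ball_subset_ball hr1 hz
  refine (hfg z hz1).trans_le (Real.rpow_le_rpow (norm_nonneg _) ?_ hβ)
  calc ‖g z‖ ≤ ‖deriv g 0‖ * ‖z‖ + (1 + ‖deriv g 0‖) * ‖z‖ ^ 2 :=
        norm_le_norm_deriv_mul_add_sq hg hgmaps hg0 hz1
    _ ≤ ‖deriv g 0‖ * r + 2 * r ^ 2 := by gcongr; linarith

end Complex

def IsTangentDisc (Ω : Set (ℂ × ℂ)) (z X : ℂ × ℂ) (lam : ℝ) (φ : ℂ → ℂ × ℂ) : Prop :=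
  DifferentiableOn ℂ φ (ball 0 1) ∧ MapsTo φ (ball 0 1) Ω ∧ φ 0 = z ∧ deriv φ 0 = lam • X

theorem kob_le_of_isTangentDisc {Ω : Set (ℂ × ℂ)} {z X : ℂ × ℂ} {lam : ℝ} {φ : ℂ → ℂ × ℂ}
    (hlam : 0 < lam) (hφ : IsTangentDisc Ω z X lam φ) : kob Ω z X ≤ 1 / lam :=
  csInf_le ⟨0, fun _ ⟨l, hl, hc, _⟩ => hc ▸ by positivity⟩ ⟨lam, hlam, rfl, φ, hφ⟩

theorem le_kob_of_forall_isTangentDisc {Ω : Set (ℂ × ℂ)} {z X : ℂ × ℂ} {c : ℝ}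
    (hne : ∃ lam φ, 0 < lam ∧ IsTangentDisc Ω z X lam φ)
    (h : ∀ lam φ, 0 < lam → IsTangentDisc Ω z X lam φ → c ≤ 1 / lam) : c ≤ kob Ω z X := by
  obtain ⟨lam, φ, hlam, hφ⟩ := hne
  refine le_csInf ⟨1 / lam, lam, hlam, rfl, φ, hφ⟩ ?_
  rintro _ ⟨l, hl, rfl, ψ, hψ⟩
  exact h l ψ hl hψ

theorem mul_norm_le_of_isTangentDisc_Gpsi_rpow {β δ r lam : ℝ} {xN xT : ℂ} {φ : ℂ → ℂ × ℂ}
    (hβ0 : 0 < β) (hβ1 : β < 1) (hr0 : 0 < r) (hr1 : r ≤ 1) (hδ : δ ≤ r ^ (2 * β))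
    (hxT : ‖xT‖ ≤ r ^ (2 * (1 - β)) * ‖xN‖) (hlam : 0 < lam)
    (hφ : IsTangentDisc (Gpsi (fun x => x ^ β)) (pdel δ) (xN, xT) lam φ) :
    lam * ‖xN‖ ≤ 8 ^ (1 - β)⁻¹ * r ^ (2 * β - 1) := by
  obtain ⟨hd, hmaps, h0, hderiv⟩ := hφ
  have hφ' : HasDerivAt φ (lam • (xN, xT)) 0 :=
    hderiv ▸ (hd.differentiableAt (isOpen_ball.mem_nhds (mem_ball_self one_pos))).hasDerivAt
  have hf : deriv (fun z => (φ z).1) 0 = lam • xN := by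
    simpa using hφ'.hasFDerivAt.fst.hasDerivAt.deriv
  have hg : deriv (fun z => (φ z).2) 0 = lam • xT := by
    simpa using hφ'.hasFDerivAt.snd.hasDerivAt.deriv
  have hB := Complex.norm_deriv_le_of_re_lt_rpow_norm hβ0.le hr0 hr1 hd.fst hd.snd
    (fun z hz => mem_ball_zero_iff.2 (hmaps hz).2.1) (by simp [h0, pdel])
    fun z hz => (hmaps hz).2.2
  rw [hf, hg] at hB
  simp only [h0, pdel, norm_smul, Real.norm_of_nonneg hlam.le] at hB
  refine Real.le_rpow_mul_of_le_two_mul_rpow_add hβ0 hβ1 hr0 (by positivity) (s := lam * ‖xT‖)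
    (by positivity) (by nlinarith) (hB.trans ?_)
  gcongr
  simpa using hδ

section ModelDisc

variable {β δ κ r : ℝ} (hβ0 : 1 / 2 ≤ β) (hβ1 : β ≤ 1) (hr0 : 0 < r) (hr1 : r ≤ 1)
  (hκ0 : 0 < κ) (hκ1 : κ ≤ 1 / 2) (hδ : 0 < δ) (hδκ : δ + κ ≤ 1)
include hβ0 hβ1 hr0 hr1 hκ0 hκ1 hδ hδκ

theorem mem_Gpsi_rpow {u : ℂ} (hu : ‖u‖ < 1) {z : ℂ × ℂ}
    (h1 : z.1 = -(δ : ℂ) + ((κ * r ^ (2 * β - 1) : ℝ) : ℂ) * u)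
    (h2 : ‖z.2‖ = ‖u‖ * ‖((κ * r : ℝ) : ℂ) + u / 2‖) : z ∈ Gpsi (fun x => x ^ β) := by
  have ha0 : 0 < r ^ (2 * β - 1) := Real.rpow_pos_of_pos hr0 _
  have ha1 : r ^ (2 * β - 1) ≤ 1 := Real.rpow_le_one hr0.le hr1 (by linarith)
  have hu0 := norm_nonneg u
  refine ⟨?_, ?_, ?_⟩
  · calc ‖z.1‖ ≤ δ + κ * r ^ (2 * β - 1) * ‖u‖ := by
          rw [h1]
          refine (norm_add_le _ _).trans_eq ?_
          rw [norm_neg, norm_mul, norm_real, norm_real, Real.norm_of_nonneg hδ.le,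
            Real.norm_of_nonneg (by positivity)]
      _ < 1 := by
          have : r ^ (2 * β - 1) * ‖u‖ < 1 := by nlinarith
          nlinarith [mul_lt_mul_of_pos_left this hκ0]
  · calc ‖z.2‖ ≤ ‖u‖ * (κ * r + ‖u‖ / 2) := by
          rw [h2]
          gcongr
          refine (norm_add_le _ _).trans_eq ?_
          rw [norm_real, Real.norm_of_nonneg (by positivity), norm_div, Complex.norm_two]
      _ < 1 := by nlinarith [mul_le_of_le_one_left hκ0.le hr1]
  · show z.1.re < ‖z.2‖ ^ β
    have hre : z.1.re = -δ + κ * r ^ (2 * β - 1) * u.re := by simp [h1]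
    rw [hre, h2]
    rcases le_or_gt u.re 0 with hu_re | hu_re
    · nlinarith [Real.rpow_nonneg (mul_nonneg hu0 (norm_nonneg (((κ * r : ℝ) : ℂ) + u / 2))) β,
        mul_nonpos_of_nonneg_of_nonpos (by positivity : 0 ≤ κ * r ^ (2 * β - 1)) hu_re]
    have hmax : max (κ * r) (‖u‖ / 2) ≤ ‖((κ * r : ℝ) : ℂ) + u / 2‖ := by
      simpa [norm_div] using
        Complex.max_le_norm_ofReal_add (mul_pos hκ0 hr0).le (w := u / 2) (by simp; linarith)
    calc -δ + κ * r ^ (2 * β - 1) * u.re < κ * r ^ (2 * β - 1) * ‖u‖ := by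
          nlinarith [mul_le_mul_of_nonneg_left (re_le_norm u)
            (by positivity : 0 ≤ κ * r ^ (2 * β - 1))]
      _ ≤ (‖u‖ * max (κ * r) (‖u‖ / 2)) ^ β :=
          Real.mul_rpow_two_mul_sub_one_mul_le hβ0 hβ1 hκ0 hκ1 hr0 (hu_re.trans_le (re_le_norm u))
      _ ≤ (‖u‖ * ‖((κ * r : ℝ) : ℂ) + u / 2‖) ^ β := by gcongr

theorem exists_isTangentDisc_Gpsi_rpow {xN xT : ℂ} (hxN : xN ≠ 0)
    (hxT : ‖xT‖ = r ^ (2 * (1 - β)) * ‖xN‖) :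
    ∃ φ, IsTangentDisc (Gpsi (fun x => x ^ β)) (pdel δ) (xN, xT)
      (κ * r ^ (2 * β - 1) / ‖xN‖) φ := by
  have hN : 0 < ‖xN‖ := norm_pos_iff.2 hxN
  have hT : 0 < ‖xT‖ := hxT ▸ mul_pos (Real.rpow_pos_of_pos hr0 _) hN
  set ωN := xN / (‖xN‖ : ℂ)
  set ωT := xT / (‖xT‖ : ℂ)
  have hωN : ‖ωN‖ = 1 := by simp [ωN, hN.ne']
  have hωT : ‖ωT‖ = 1 := by simp [ωT, hT.ne']
  refine ⟨fun ζ => (-(δ : ℂ) + ((κ * r ^ (2 * β - 1) : ℝ) : ℂ) * (ωN * ζ),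
    ωT * (ζ * (((κ * r : ℝ) : ℂ) + ωN * ζ / 2))), by fun_prop, fun ζ hζ => ?_, by simp [pdel],
    ?_⟩
  · refine mem_Gpsi_rpow hβ0 hβ1 hr0 hr1 hκ0 hκ1 hδ hδκ (u := ωN * ζ) ?_ rfl ?_
    · simpa [hωN] using hζ
    · simp only [norm_mul, hωN, hωT, one_mul]
  · have h1 := (((hasDerivAt_id (0 : ℂ)).const_mul ωN).const_mul
      ((κ * r ^ (2 * β - 1) : ℝ) : ℂ)).const_add (-(δ : ℂ))
    have h2 := ((hasDerivAt_id (0 : ℂ)).mul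
      ((((hasDerivAt_id (0 : ℂ)).const_mul ωN).div_const 2).const_add
        ((κ * r : ℝ) : ℂ))).const_mul ωT
    refine (h1.prodMk h2).deriv.trans ?_
    have hat : r ^ (2 * β - 1) * r ^ (2 * (1 - β)) = r := by
      rw [← Real.rpow_add hr0, show 2 * β - 1 + 2 * (1 - β) = 1 by ring, Real.rpow_one]
    ext
    · simp [ωN]
      field_simp
    · have hr : (r : ℂ) = ((r ^ (2 * (1 - β)) : ℝ) : ℂ) * ((r ^ (2 * β - 1) : ℝ) : ℂ) := by
        rw [← ofReal_mul, mul_comm, hat]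
      have : ((r ^ (2 * (1 - β)) : ℝ) : ℂ) ≠ 0 :=
        ofReal_ne_zero.2 (Real.rpow_pos_of_pos hr0 _).ne'
      simp [ωT, hxT]
      rw [hr]
      field_simp

end ModelDisc

theorem kob_Gpsi_rpow_bounds {β δ κ r : ℝ} (hβ0 : 1 / 2 ≤ β) (hβ1 : β < 1) (hr0 : 0 < r)
    (hr1 : r ≤ 1) (hκ0 : 0 < κ) (hκ1 : κ ≤ 1 / 2) (hδ : 0 < δ) (hδr : δ ≤ r ^ (2 * β))
    (hδκ : δ + κ ≤ 1) {xN xT : ℂ} (hxN : xN ≠ 0) (hxT : ‖xT‖ = r ^ (2 * (1 - β)) * ‖xN‖) :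
    ‖xN‖ / (8 ^ (1 - β)⁻¹ * r ^ (2 * β - 1)) ≤ kob (Gpsi (fun x => x ^ β)) (pdel δ) (xN, xT) ∧
      kob (Gpsi (fun x => x ^ β)) (pdel δ) (xN, xT) ≤ ‖xN‖ / (κ * r ^ (2 * β - 1)) := by
  have hN : 0 < ‖xN‖ := norm_pos_iff.2 hxN
  have ha : 0 < r ^ (2 * β - 1) := Real.rpow_pos_of_pos hr0 _
  obtain ⟨φ, hφ⟩ := exists_isTangentDisc_Gpsi_rpow hβ0 hβ1.le hr0 hr1 hκ0 hκ1 hδ hδκ hxN hxT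
  have hlam : 0 < κ * r ^ (2 * β - 1) / ‖xN‖ := by positivity
  refine ⟨le_kob_of_forall_isTangentDisc ⟨_, φ, hlam, hφ⟩ fun lam ψ hl hψ => ?_, ?_⟩
  · have := mul_norm_le_of_isTangentDisc_Gpsi_rpow (by linarith) hβ1 hr0 hr1 hδr hxT.le hl hψ
    rw [div_le_div_iff₀ (by positivity) hl]
    linarith
  · simpa using kob_le_of_isTangentDisc hlam hφ

/-- for `ψ(x) = x^β`, `1/2 < β < 1`, in the intermediate zone
`δ^{1/β−1}|x_N| ≤ |x_T| ≤ |x_N|` the metric is comparable to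
`t^{(1−2β)/(2(1−β))}|x_N|` where `t = |x_T|/|x_N|`. -/
theorem stmt10 (β : ℝ) (hβ0 : 1 / 2 < β) (hβ1 : β < 1) :
    ∀ δ₀ ∈ Ioo (0 : ℝ) 1, ∃ c C : ℝ, 0 < c ∧ c < C ∧
      ∀ δ ∈ Ioc (0 : ℝ) δ₀, ∀ xN xT : ℂ, xN ≠ 0 →
        δ ^ (1 / β - 1) * ‖xN‖ ≤ ‖xT‖ →
        ‖xT‖ ≤ ‖xN‖ →
        c * (‖xT‖ / ‖xN‖) ^ ((1 - 2 * β) / (2 * (1 - β))) *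
            ‖xN‖ ≤ kob (Gpsi (fun x => x ^ β)) (pdel δ) (xN, xT) ∧
        kob (Gpsi (fun x => x ^ β)) (pdel δ) (xN, xT) ≤
            C * (‖xT‖ / ‖xN‖) ^ ((1 - 2 * β) / (2 * (1 - β))) *
              ‖xN‖ := by
  rintro δ₀ ⟨hδ₀0, hδ₀1⟩
  have hC₀ : 1 ≤ (8 : ℝ) ^ (1 - β)⁻¹ := Real.one_le_rpow (by norm_num) (by simp; linarith)
  refine ⟨1 / 8 ^ (1 - β)⁻¹, 1 / ((1 - δ₀) / 2), by positivity,
    one_div_lt_one_div_of_lt (by linarith) (by linarith), ?_⟩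
  rintro δ ⟨hδ0, hδ⟩ xN xT hxN hlow hupp
  have hN : 0 < ‖xN‖ := norm_pos_iff.2 hxN
  obtain ⟨r, hr0, hr1, hrt, hδr, hte⟩ := exists_rpow_two_mul_one_sub_eq (by linarith) hβ1 hδ0
    ((div_le_one hN).2 hupp) ((le_div_iff₀ hN).2 hlow)
  have hxT : ‖xT‖ = r ^ (2 * (1 - β)) * ‖xN‖ := by rw [hrt]; field_simp
  obtain ⟨hlo, hup⟩ := kob_Gpsi_rpow_bounds (κ := (1 - δ₀) / 2) hβ0.le hβ1 hr0 hr1 (by linarith)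
    (by linarith) hδ0 hδr (by linarith) hxN hxT
  rw [hte]
  constructor
  · convert hlo using 1; field_simp
  · convert hup using 1; field_simp
end

section
/- Let ψ(x) = x, so that G_ψ = {(z₁,z₂) ∈ ℂ² : |z₁| < 1, |z₂| < 1, Re z₁ < |z₂|}. Let δ ∈ (0, 1/2) and x_T ∈ ℂ with |x_T| < 1 and δ < (1 − |x_T|)². Set α := (1 − |x_T|)²/(2δ) and define φ(ζ) := (−δ + ζ, x_T·ζ + α·(x_T/|x_T|)·ζ²) (with the convention x_T/|x_T| = 1 when x_T = 0). Then φ(ζ) ∈ G_ψ for every ζ ∈ ℂ with |ζ| < √δ/(2(1 − |x_T|)). In particular, κ_{G_ψ}(p_δ; (1, x_T)) ≤ 2(1 − |x_T|)/√δ. -/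
open Complex Metric Set

/-! Write `x_T = a u` with `a = |x_T|` and `|u| = 1`, so that the second coordinate of `φ(ζ)` is
`u (a ζ + α ζ²)`. For `|ζ| < r := √δ/(2(1 − a))` we have `r < 1/2` and `α r² = 1/8`, which gives
`|z₁| < 1` and `|z₂| < 1`. For the defining inequality, `|a ζ + α ζ²| ≥ Re ζ · (a + α Re ζ)`, and
`Re ζ − δ < Re ζ · (a + α Re ζ)` because the quadratic `(1 − a)s − α s²` never exceeds
`(1 − a)²/(4α) = δ/2`. Precomposing `φ` with `w ↦ r w` gives a disc through `p_δ` with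
derivative `r (1, x_T)`, whence `κ ≤ 1/r`. -/

lemma re_mul_re_le_norm_mul (z w : ℂ) : z.re * w.re ≤ ‖z * w‖ :=
  calc z.re * w.re ≤ |z.re| * |w.re| := by rw [← abs_mul]; exact le_abs_self _
    _ ≤ ‖z‖ * ‖w‖ :=
      mul_le_mul (abs_re_le_norm z) (abs_re_le_norm w) (abs_nonneg _) (norm_nonneg _)
    _ = ‖z * w‖ := (norm_mul z w).symm

lemma re_sub_lt_norm_mul_add_mul_sq {a α δ : ℝ} (hα : 0 < α) (h : (1 - a) ^ 2 < 4 * α * δ)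
    (ζ : ℂ) : ζ.re - δ < ‖(a : ℂ) * ζ + α * ζ ^ 2‖ := by
  have hquad : ζ.re - δ < ζ.re * (a + α * ζ.re) := by
    nlinarith [sq_nonneg (2 * α * ζ.re - (1 - a))]
  calc ζ.re - δ < ζ.re * ((a : ℂ) + α * ζ).re := by simpa using hquad
    _ ≤ ‖ζ * (a + α * ζ)‖ := re_mul_re_le_norm_mul _ _
    _ = ‖(a : ℂ) * ζ + α * ζ ^ 2‖ := by ring_nf

lemma norm_mul_add_mul_sq_le {a α : ℝ} (ha : 0 ≤ a) (hα : 0 ≤ α) (ζ : ℂ) :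
    ‖(a : ℂ) * ζ + α * ζ ^ 2‖ ≤ a * ‖ζ‖ + α * ‖ζ‖ ^ 2 :=
  (norm_add_le _ _).trans_eq <| by
    rw [norm_mul, norm_mul, norm_pow, norm_real, norm_real, Real.norm_of_nonneg ha,
      Real.norm_of_nonneg hα]

lemma norm_ite_div_norm (x : ℂ) : ‖if x = 0 then 1 else x / (‖x‖ : ℂ)‖ = 1 := by
  split_ifs with hx
  · exact norm_one
  · rw [norm_div, norm_real, norm_norm, div_self (norm_ne_zero_iff.mpr hx)]

lemma norm_mul_ite_div_norm (x : ℂ) : (‖x‖ : ℂ) * (if x = 0 then 1 else x / (‖x‖ : ℂ)) = x := by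
  split_ifs with hx
  · simp [hx]
  · exact mul_div_cancel₀ x (ofReal_ne_zero.mpr (norm_ne_zero_iff.mpr hx))

theorem mem_Gpsi_id_of_norm_lt {δ : ℝ} {xT u ζ : ℂ} (hδ0 : 0 < δ) (hδ : δ < 1 / 2) (hxT : ‖xT‖ < 1)
    (hδ' : δ < (1 - ‖xT‖) ^ 2) (hu : ‖u‖ = 1) (hxu : (‖xT‖ : ℂ) * u = xT)
    (hζ : ‖ζ‖ < √δ / (2 * (1 - ‖xT‖))) :
    (-(δ : ℂ) + ζ, xT * ζ + (((1 - ‖xT‖) ^ 2 / (2 * δ) : ℝ) : ℂ) * u * ζ ^ 2) ∈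
      Gpsi (fun x => x) := by
  set a := ‖xT‖
  set α := (1 - a) ^ 2 / (2 * δ) with hα_def
  set r := √δ / (2 * (1 - a))
  have ha0 : 0 ≤ a := norm_nonneg xT
  have ha1 : 0 < 1 - a := by linarith
  have hα : 0 < α := by positivity
  have hsqrt : √δ < 1 - a := (Real.sqrt_lt' ha1).mpr hδ'
  have hr : r < 1 / 2 := by rw [div_lt_iff₀ (by positivity)]; linarith
  have hαr : α * r ^ 2 = 1 / 8 := by
    rw [div_pow, Real.sq_sqrt hδ0.le, hα_def]; field_simp; ring
  have hz₂ : ‖xT * ζ + (α : ℂ) * u * ζ ^ 2‖ = ‖(a : ℂ) * ζ + α * ζ ^ 2‖ := by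
    rw [← hxu, show (a : ℂ) * u * ζ + α * u * ζ ^ 2 = u * (a * ζ + α * ζ ^ 2) by ring,
      norm_mul, hu, one_mul]
  refine ⟨?_, ?_, ?_⟩
  · calc ‖-(δ : ℂ) + ζ‖ ≤ ‖-(δ : ℂ)‖ + ‖ζ‖ := norm_add_le _ _
      _ < 1 := by rw [norm_neg, norm_real, Real.norm_of_nonneg hδ0.le]; linarith
  · have ht : α * ‖ζ‖ ^ 2 ≤ α * r ^ 2 := by gcongr
    have hat : a * ‖ζ‖ ≤ ‖ζ‖ := mul_le_of_le_one_left (norm_nonneg ζ) (by linarith)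
    calc ‖xT * ζ + (α : ℂ) * u * ζ ^ 2‖ ≤ a * ‖ζ‖ + α * ‖ζ‖ ^ 2 :=
          hz₂ ▸ norm_mul_add_mul_sq_le ha0 hα.le ζ
      _ < 1 := by linarith
  · have hdisc : (1 - a) ^ 2 < 4 * α * δ := by
      rw [show 4 * α * δ = 2 * (1 - a) ^ 2 by rw [hα_def]; field_simp; ring]; nlinarith
    show (-(δ : ℂ) + ζ).re < ‖_‖
    rw [hz₂, add_re, neg_re, ofReal_re, neg_add_eq_sub]
    exact re_sub_lt_norm_mul_add_mul_sq hα hdisc ζ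

theorem kob_le_one_div_of_mapsTo_ball {Ω : Set (ℂ × ℂ)} {z X : ℂ × ℂ} {φ : ℂ → ℂ × ℂ} {r : ℝ}
    (hr : 0 < r) (hφ : DifferentiableOn ℂ φ (ball 0 r)) (hmaps : MapsTo φ (ball 0 r) Ω)
    (hφ0 : φ 0 = z) (hφ' : deriv φ 0 = X) : kob Ω z X ≤ 1 / r := by
  have hscale : MapsTo (fun w : ℂ => (r : ℂ) * w) (ball 0 1) (ball 0 r) := fun w hw => by
    rw [mem_ball_zero_iff] at hw ⊢
    rw [norm_mul, norm_real, Real.norm_of_nonneg hr.le]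
    exact mul_lt_of_lt_one_right hr hw
  refine csInf_le ⟨0, fun c ⟨l, hl, hc, _⟩ => hc ▸ by positivity⟩
    ⟨r, hr, rfl, fun w => φ (r * w), ?_, hmaps.comp hscale, by simpa using hφ0, ?_⟩
  · exact hφ.comp (differentiableOn_id.const_mul _) hscale
  · rw [deriv_comp_mul_left, mul_zero, hφ', coe_smul]

/-- for `ψ(x) = x` and `δ < (1−|x_T|)²`, with `α = (1−|x_T|)²/(2δ)`, the
map `ζ ↦ (−δ + ζ, x_Tζ + α(x_T/|x_T|)ζ²)` takes the disc of radius `√δ/(2(1−|x_T|))`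
into `G_ψ`; consequently `κ_{G_ψ}(p_δ; (1, x_T)) ≤ 2(1−|x_T|)/√δ`. -/
theorem stmt18 (δ : ℝ) (hδ0 : 0 < δ) (hδ : δ < 1 / 2)
    (xT : ℂ) (hxT : ‖xT‖ < 1) (hδ' : δ < (1 - ‖xT‖) ^ 2) :
    (∀ ζ : ℂ, ‖ζ‖ < Real.sqrt δ / (2 * (1 - ‖xT‖)) →
      ((-(δ : ℂ)) + ζ,
        xT * ζ + (((1 - ‖xT‖) ^ 2 / (2 * δ) : ℝ) : ℂ) *
          (if xT = 0 then 1 else xT / ((‖xT‖ : ℝ) : ℂ)) * ζ ^ 2) ∈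
        Gpsi (fun x => x)) ∧
    kob (Gpsi (fun x => x)) (pdel δ) ((1 : ℂ), xT) ≤
      2 * (1 - ‖xT‖) / Real.sqrt δ := by
  have hmem := fun ζ (hζ : ‖ζ‖ < √δ / (2 * (1 - ‖xT‖))) =>
    mem_Gpsi_id_of_norm_lt hδ0 hδ hxT hδ' (norm_ite_div_norm xT) (norm_mul_ite_div_norm xT) hζ
  refine ⟨hmem, ?_⟩
  have hr : 0 < √δ / (2 * (1 - ‖xT‖)) := by
    have : 0 < 1 - ‖xT‖ := by linarith
    positivity
  set c : ℂ := (((1 - ‖xT‖) ^ 2 / (2 * δ) : ℝ) : ℂ) * (if xT = 0 then 1 else xT / (‖xT‖ : ℂ))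
  have hφ' : HasDerivAt (fun ζ : ℂ => (-(δ : ℂ) + ζ, xT * ζ + c * ζ ^ 2)) (1, xT) 0 := by
    refine ((hasDerivAt_id 0).const_add _).prodMk ?_
    simpa using ((hasDerivAt_id' 0).const_mul xT).fun_add
      (((hasDerivAt_id' 0).fun_pow 2).const_mul c)
  calc kob (Gpsi (fun x => x)) (pdel δ) (1, xT) ≤ 1 / (√δ / (2 * (1 - ‖xT‖))) :=
        kob_le_one_div_of_mapsTo_ball hr (by fun_prop)
          (fun ζ hζ => hmem ζ (mem_ball_zero_iff.mp hζ)) (by simp [pdel]) hφ'.deriv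
    _ = 2 * (1 - ‖xT‖) / √δ := one_div_div _ _
end
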